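/- Let (X, A₀) be a Banach quasi *-algebra, let Ω ∈ T(X), and let b ∈ A₀ satisfy b* = b, ‖b‖₀ ≤ 1, and bx = xb for every x ∈ X (where bx and xb denote the left and right module actions). Define Ω_b(x, y) := Ω(xb, yb) for x, y ∈ X. Then Ω_b ∈ T(X), i.e. Ω_b(x,x) ≥ 0 for all x ∈ X, Ω_b(xa, c) = Ω_b(a, x*c) for all x ∈ X and a, c ∈ A₀, |Ω_b(x,y)| ≤ ‖x‖‖y‖ for all x, y ∈ X, and Ω_b(x*, x*) = Ω_b(x, x) for all x ∈ X. -/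
import Mathlib


open ComplexOrder

/-- A Banach quasi *-algebra `(X, A₀)`: a complex Banach space `X` with an isometric
conjugate-linear involution, containing a dense copy of a normed *-algebra `A₀` whose
left and right multiplications extend to module actions of `A₀` on `X` satisfying the
quasi *-algebra compatibility conditions and the norm inequalities
`‖a‖ ≤ ‖a‖₀`, `‖ax‖ ≤ ‖a‖₀‖x‖`, `‖xa‖ ≤ ‖x‖‖a‖₀`.
Here `lmul a x = a·x` and `rmul a x = x·a`. -/
structure BanachQuasiStarAlgebra (X A : Type*)
    [NormedAddCommGroup X] [NormedSpace ℂ X] [CompleteSpace X]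
    [StarAddMonoid X] [StarModule ℂ X]
    [NormedRing A] [StarRing A] [NormedAlgebra ℂ A] : Type _ where
  incl : A →ₗ[ℂ] X
  incl_injective : Function.Injective incl
  incl_dense : DenseRange incl
  incl_star : ∀ a : A, incl (star a) = star (incl a)
  lmul : A →ₗ[ℂ] X →ₗ[ℂ] X
  rmul : A →ₗ[ℂ] X →ₗ[ℂ] X
  lmul_incl : ∀ a b : A, lmul a (incl b) = incl (a * b)
  rmul_incl : ∀ a b : A, rmul a (incl b) = incl (b * a)
  lmul_lmul : ∀ (a b : A) (x : X), lmul a (lmul b x) = lmul (a * b) x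
  rmul_rmul : ∀ (a b : A) (x : X), rmul b (rmul a x) = rmul (a * b) x
  lmul_rmul : ∀ (a b : A) (x : X), rmul b (lmul a x) = lmul a (rmul b x)
  star_lmul : ∀ (a : A) (x : X), star (lmul a x) = rmul (star a) (star x)
  norm_star : ∀ x : X, ‖star x‖ = ‖x‖
  norm_incl_le : ∀ a : A, ‖incl a‖ ≤ ‖a‖
  norm_lmul_le : ∀ (a : A) (x : X), ‖lmul a x‖ ≤ ‖a‖ * ‖x‖
  norm_rmul_le : ∀ (a : A) (x : X), ‖rmul a x‖ ≤ ‖x‖ * ‖a‖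


variable {X A : Type*}
    [NormedAddCommGroup X] [NormedSpace ℂ X] [CompleteSpace X]
    [StarAddMonoid X] [StarModule ℂ X]
    [NormedRing A] [StarRing A] [NormedAlgebra ℂ A]

/-- `Ω ∈ S(X)`: a positive sesquilinear form on `X × X` which is invariant
(`Ω(xa, b) = Ω(a, x*b)` for `x ∈ X`, `a, b ∈ A₀`) and bounded
(`|Ω(x,y)| ≤ ‖x‖‖y‖`). -/
def MemS (Q : BanachQuasiStarAlgebra X A)
    (Ω : X →ₗ[ℂ] X →ₛₗ[starRingEnd ℂ] ℂ) : Prop :=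
  (∀ x : X, 0 ≤ Ω x x) ∧
  (∀ (x : X) (a b : A),
      Ω (Q.rmul a x) (Q.incl b) = Ω (Q.incl a) (Q.rmul b (star x))) ∧
  (∀ x y : X, ‖Ω x y‖ ≤ ‖x‖ * ‖y‖)

/-- `Ω ∈ T(X)`: `Ω ∈ S(X)` and `Ω(x,x) = Ω(x*,x*)` for every `x ∈ X`. -/
def MemT (Q : BanachQuasiStarAlgebra X A)
    (Ω : X →ₗ[ℂ] X →ₛₗ[starRingEnd ℂ] ℂ) : Prop :=
  MemS Q Ω ∧ ∀ x : X, Ω x x = Ω (star x) (star x)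

/-- Let `(X, A₀)` be a Banach quasi *-algebra, `Ω ∈ T(X)`, and
`b ∈ A₀` with `b* = b`, `‖b‖₀ ≤ 1`, and `bx = xb` for every `x ∈ X`.  Then the form
`Ω_b(x, y) := Ω(xb, yb)` belongs to `T(X)`:  it is positive, invariant
(`Ω_b(xa, c) = Ω_b(a, x*c)`), bounded by the norm (`|Ω_b(x,y)| ≤ ‖x‖‖y‖`) and satisfies
`Ω_b(x*, x*) = Ω_b(x, x)`. -/
theorem statement13 (Q : BanachQuasiStarAlgebra X A)
    (Ω : X →ₗ[ℂ] X →ₛₗ[starRingEnd ℂ] ℂ) (hΩ : MemT Q Ω)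
    (b : A) (hb_sa : star b = b) (hb_norm : ‖b‖ ≤ 1)
    (hb_central : ∀ x : X, Q.lmul b x = Q.rmul b x) :
    (∀ x : X, 0 ≤ Ω (Q.rmul b x) (Q.rmul b x)) ∧
    (∀ (x : X) (a c : A),
        Ω (Q.rmul b (Q.rmul a x)) (Q.rmul b (Q.incl c)) =
          Ω (Q.rmul b (Q.incl a)) (Q.rmul b (Q.rmul c (star x)))) ∧
    (∀ x y : X, ‖Ω (Q.rmul b x) (Q.rmul b y)‖ ≤ ‖x‖ * ‖y‖) ∧
    (∀ x : X, Ω (Q.rmul b (star x)) (Q.rmul b (star x)) = Ω (Q.rmul b x) (Q.rmul b x)) := by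
  obtain ⟨⟨hpos, hinv, hbd⟩, hT⟩ := hΩ
  have hstar : ∀ x : X, star (Q.rmul b x) = Q.rmul b (star x) := by
    intro x
    rw [← hb_central, Q.star_lmul, hb_sa]
  refine ⟨fun x => hpos _, ?_, ?_, ?_⟩
  · intro x a c
    rw [Q.rmul_rmul, Q.rmul_incl, hinv, Q.rmul_incl, Q.rmul_rmul]
  · intro x y
    have h1 : ‖Q.rmul b x‖ ≤ ‖x‖ :=
      (Q.norm_rmul_le b x).trans (mul_le_of_le_one_right (norm_nonneg x) hb_norm)
    have h2 : ‖Q.rmul b y‖ ≤ ‖y‖ :=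
      (Q.norm_rmul_le b y).trans (mul_le_of_le_one_right (norm_nonneg y) hb_norm)
    exact (hbd _ _).trans (mul_le_mul h1 h2 (norm_nonneg _) (norm_nonneg _))
  · intro x
    rw [← hstar, ← hT]
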